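/- The map bₙ : Bₙ → {0, 1, ..., 2ⁿn!−1} defined by bₙ(π) = Σ_{i=1}^{n} inv_{n−i+1}(π)·2^{i−1}·(i−1)! is a bijection, where inv_i(π) counts the i-inversions of the signed permutation π. -/

import Mathlib

/-- A signed permutation of the coordinates of `ℝⁿ`: it maps `eᵢ` to `(sign i) • e_{toPerm i}`. -/
structure SignedPerm (n : ℕ) where
  toPerm : Equiv.Perm (Fin n)
  sign : Fin n → ℤ
  sign_mem : ∀ i, sign i = 1 ∨ sign i = -1

/-- The `i`-th standard basis vector (with integer coordinates). -/
def stdVec (n : ℕ) (i : Fin n) : Fin n → ℤ := Pi.single i 1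

/-- The positive roots `{e_k, e_i + e_j, e_i - e_j : k ∈ [n], i < j}` of type `Bₙ`. -/
def posRoots (n : ℕ) : Set (Fin n → ℤ) :=
  {v | (∃ k, v = stdVec n k) ∨
    ∃ i j : Fin n, i < j ∧ (v = stdVec n i + stdVec n j ∨ v = stdVec n i - stdVec n j)}

/-- The positive roots `{e_i, e_i + e_j, e_i - e_j : i < j ≤ n}` with first index `i`. -/
def posRootsAt (n : ℕ) (i : Fin n) : Set (Fin n → ℤ) :=
  {v | v = stdVec n i ∨
    ∃ j : Fin n, i < j ∧ (v = stdVec n i + stdVec n j ∨ v = stdVec n i - stdVec n j)}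

/-- The action of `π⁻¹` on vectors: since `π(eᵢ) = (sign i) • e_{toPerm i}`,
we have `(π⁻¹ v) j = (sign j) * v (toPerm j)`. -/
def invAct {n : ℕ} (π : SignedPerm n) (v : Fin n → ℤ) : Fin n → ℤ :=
  fun j => π.sign j * v (π.toPerm j)

/-- The number of `i`-inversions: `inv_i π = #{v ∈ Φ⁺_{n,i} | π⁻¹(v) ∈ -Φ⁺ₙ}`. -/
noncomputable def invAt {n : ℕ} (π : SignedPerm n) (i : Fin n) : ℕ :=
  Set.ncard {v ∈ posRootsAt n i | -(invAct π v) ∈ posRoots n}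

/-!
Let `τ` be the underlying permutation of `π⁻¹` and `ℓ_i = #{j > i | τ j < τ i}` its Lehmer code.
Sorting the roots `e_i`, `e_i ± e_j` (`j > i`) by whether `π⁻¹` makes them negative gives
`inv_i(π) = ℓ_i` when `π⁻¹ e_i` is positive and `inv_i(π) = 2(n - i) + 1 - ℓ_i` otherwise
(1-based `i`). Since `ℓ_i ≤ n - i`, the digit `inv_i(π)` recovers both the sign and `ℓ_i`, and the
Lehmer code recovers `τ`. So `π ↦ (inv_i π)_i` is injective into the digit boxes
`∏ [0, 2(n - i) + 1]`, which have `2ⁿ n! = |Bₙ|` elements, hence bijective; the code is the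
mixed-radix reading of these digits (`finPiFinEquiv`).
-/

open Finset

section Roots

variable {n : ℕ}

lemma stdVec_apply (i j : Fin n) : stdVec n i j = if j = i then 1 else 0 :=
  Pi.single_apply i 1 j

lemma apply_eq_one_of_mem_posRoots {v : Fin n → ℤ} (hv : v ∈ posRoots n) {p : Fin n}
    (hp : v p ≠ 0) (hlt : ∀ q < p, v q = 0) : v p = 1 := by
  rcases hv with ⟨k, rfl⟩ | ⟨a, b, hab, rfl | rfl⟩
  · simp_all [stdVec_apply]
  all_goals
    obtain rfl | rfl : p = a ∨ p = b := by
      by_contra! h; simp [stdVec_apply, h.1, h.2] at hp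
    · simp [stdVec_apply, hab.ne]
    · simpa [stdVec_apply, hab.ne] using hlt a hab

lemma smul_stdVec_add_smul_stdVec_mem_posRoots_iff_of_lt {c d : ℤ} (hc : c ≠ 0)
    (hd : d = 1 ∨ d = -1) {p q : Fin n} (hpq : p < q) :
    c • stdVec n p + d • stdVec n q ∈ posRoots n ↔ c = 1 := by
  refine ⟨fun h => ?_, ?_⟩
  · simpa [stdVec_apply, hpq.ne] using apply_eq_one_of_mem_posRoots h (p := p)
      (by simpa [stdVec_apply, hpq.ne])
      (fun r hr => by simp [stdVec_apply, hr.ne, (hr.trans hpq).ne])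
  · rintro rfl
    refine Or.inr ⟨p, q, hpq, ?_⟩
    rcases hd with rfl | rfl <;> simp [sub_eq_add_neg]

lemma smul_stdVec_mem_posRoots_iff {c : ℤ} (hc : c ≠ 0) (p : Fin n) :
    c • stdVec n p ∈ posRoots n ↔ c = 1 := by
  refine ⟨fun h => ?_, fun h => Or.inl ⟨p, by simp [h]⟩⟩
  simpa [stdVec_apply] using apply_eq_one_of_mem_posRoots h (p := p) (by simpa [stdVec_apply])
    (fun q hq => by simp [stdVec_apply, hq.ne])

lemma smul_stdVec_add_smul_stdVec_mem_posRoots_iff_of_ne {c d : ℤ} (hc : c = 1 ∨ c = -1)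
    (hd : d = 1 ∨ d = -1) {p q : Fin n} (hpq : p ≠ q) :
    c • stdVec n p + d • stdVec n q ∈ posRoots n ↔ if p < q then c = 1 else d = 1 := by
  rcases hpq.lt_or_gt with h | h
  · rw [if_pos h, smul_stdVec_add_smul_stdVec_mem_posRoots_iff_of_lt (by omega) hd h]
  · rw [if_neg h.not_gt, add_comm,
      smul_stdVec_add_smul_stdVec_mem_posRoots_iff_of_lt (by omega) hc h]

lemma stdVec_injective : Function.Injective (stdVec n) := by
  intro i j h
  simpa [stdVec_apply] using congrFun h i

lemma disjoint_image_add_image_sub (i : Fin n) (s t : Finset (Fin n)) :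
    Disjoint (s.image (stdVec n i + stdVec n ·)) (t.image (stdVec n i - stdVec n ·)) := by
  simp only [disjoint_left, mem_image]
  rintro _ ⟨j, -, rfl⟩ ⟨k, -, h⟩
  have := congrFun (add_left_cancel (h.symm.trans (sub_eq_add_neg _ _))) j
  simp only [stdVec_apply, Pi.neg_apply] at this
  split_ifs at this <;> omega

lemma posRootsAt_eq_coe (i : Fin n) :
    posRootsAt n i = ↑(insert (stdVec n i) ((Ioi i).image (stdVec n i + stdVec n ·) ∪
      (Ioi i).image (stdVec n i - stdVec n ·))) := by
  ext v
  simp [posRootsAt, eq_comm, and_or_left, exists_or]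

lemma ncard_sep_posRootsAt (P : (Fin n → ℤ) → Prop) [DecidablePred P] (i : Fin n) :
    {v ∈ posRootsAt n i | P v}.ncard = (if P (stdVec n i) then 1 else 0) +
      ∑ j ∈ Ioi i, ((if P (stdVec n i + stdVec n j) then 1 else 0) +
        (if P (stdVec n i - stdVec n j) then 1 else 0)) := by
  have hadd : Function.Injective (stdVec n i + stdVec n ·) :=
    (add_right_injective _).comp stdVec_injective
  have hsub : Function.Injective (stdVec n i - stdVec n ·) :=
    sub_right_injective.comp stdVec_injective
  have hnot : stdVec n i ∉ (Ioi i).image (stdVec n i + stdVec n ·) ∪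
      (Ioi i).image (stdVec n i - stdVec n ·) := by
    simp only [mem_union, mem_image, not_or, not_exists, not_and]
    refine ⟨fun j _ h => ?_, fun j _ h => ?_⟩ <;>
      simpa [stdVec_apply] using congrFun h j
  have hcoe (s : Finset (Fin n → ℤ)) : {v ∈ (s : Set _) | P v}.ncard = #(s.filter P) := by
    rw [← Set.ncard_coe_finset, coe_filter]; rfl
  have hunion : #((Ioi i).image (stdVec n i + stdVec n ·) ∪
      (Ioi i).image (stdVec n i - stdVec n ·) |>.filter P) =
      ∑ j ∈ Ioi i, ((if P (stdVec n i + stdVec n j) then 1 else 0) +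
        (if P (stdVec n i - stdVec n j) then 1 else 0)) := by
    rw [filter_union, filter_image, filter_image,
      card_union_of_disjoint (disjoint_image_add_image_sub i _ _),
      card_image_of_injective _ hadd, card_image_of_injective _ hsub,
      card_filter, card_filter, sum_add_distrib]
  rw [posRootsAt_eq_coe, hcoe, filter_insert, ← hunion]
  split_ifs with h
  · rw [card_insert_of_notMem (fun h' => hnot (mem_filter.1 h').1), add_comm]
  · rw [zero_add]

end Roots

lemma Finset.strictMonoOn_card_filter_lt {α : Type*} [LinearOrder α] (s : Finset α) :
    StrictMonoOn (fun x => #{y ∈ s | y < x}) s := by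
  intro x hx y _ hxy
  refine card_lt_card ((ssubset_iff_of_subset ?_).2 ⟨x, ?_, ?_⟩)
  · exact fun z hz => mem_filter.2 ⟨(mem_filter.1 hz).1, (mem_filter.1 hz).2.trans hxy⟩
  · simpa [hxy] using hx
  · simp

namespace Equiv.Perm

variable {n : ℕ}

def lehmer (τ : Perm (Fin n)) (i : Fin n) : ℕ := #{j ∈ Ioi i | τ j < τ i}

lemma lehmer_le (τ : Perm (Fin n)) (i : Fin n) : τ.lehmer i ≤ n - 1 - i :=
  (card_filter_le _ _).trans (Fin.card_Ioi i).le

lemma lehmer_eq_card_filter_image_Ici (τ : Perm (Fin n)) (i : Fin n) :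
    τ.lehmer i = #{y ∈ (Ici i).image τ | y < τ i} := by
  rw [filter_image, card_image_of_injective _ τ.injective, lehmer]
  congr 1
  ext j
  simp only [mem_filter, mem_Ioi, mem_Ici]
  exact ⟨fun h => ⟨h.1.le, h.2⟩,
    fun h => ⟨h.1.lt_of_ne (by rintro rfl; exact h.2.false), h.2⟩⟩

lemma image_Ici_eq_of_eqOn_Iio {τ ρ : Perm (Fin n)} {i : Fin n} (h : ∀ j < i, τ j = ρ j) :
    (Ici i).image τ = (Ici i).image ρ := by
  have key {τ ρ : Perm (Fin n)} (h : ∀ j < i, τ j = ρ j) (y : Fin n) (hy : τ.symm y < i) :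
      ρ.symm y < i := by
    rwa [ρ.symm_apply_eq.2 ((h _ hy).symm.trans (τ.apply_symm_apply y)).symm]
  ext y
  simp only [mem_image, mem_Ici, ← Equiv.eq_symm_apply, exists_eq_right, ← not_lt]
  exact not_congr ⟨key h y, key (fun j hj => (h j hj).symm) y⟩

lemma lehmer_injective : Function.Injective (lehmer (n := n)) := by
  intro τ ρ h
  ext1 i
  induction i using WellFoundedLT.induction with
  | _ i ih =>
    have hS := image_Ici_eq_of_eqOn_Iio ih
    apply (strictMonoOn_card_filter_lt ((Ici i).image τ)).injOn
      (mem_image_of_mem τ (mem_Ici.2 le_rfl)) (hS ▸ mem_image_of_mem ρ (mem_Ici.2 le_rfl))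
    dsimp only
    rw [← lehmer_eq_card_filter_image_Ici, hS, ← lehmer_eq_card_filter_image_Ici, congrFun h i]

end Equiv.Perm

lemma Fin.prod_two_mul_succ (n : ℕ) :
    ∏ i : Fin n, 2 * ((i : ℕ) + 1) = 2 ^ n * n.factorial := by
  rw [prod_mul_distrib, prod_const, Fin.prod_univ_eq_prod_range (· + 1),
    prod_range_add_one_eq_factorial]

namespace SignedPerm

open Equiv.Perm

variable {n : ℕ}

lemma ext {π π' : SignedPerm n} (hperm : π.toPerm = π'.toPerm) (hsign : π.sign = π'.sign) :
    π = π' := by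
  cases π; cases π'; congr

lemma sign_ne_zero (π : SignedPerm n) (i : Fin n) : π.sign i ≠ 0 := by
  rcases π.sign_mem i with h | h <;> simp [h]

lemma invAct_add (π : SignedPerm n) (v w : Fin n → ℤ) :
    invAct π (v + w) = invAct π v + invAct π w := by
  funext j; simp [invAct, mul_add]

lemma invAct_smul (π : SignedPerm n) (c : ℤ) (v : Fin n → ℤ) :
    invAct π (c • v) = c • invAct π v := by
  funext j; simp [invAct, mul_left_comm]

lemma invAct_stdVec (π : SignedPerm n) (i : Fin n) :
    invAct π (stdVec n i) = π.sign (π.toPerm.symm i) • stdVec n (π.toPerm.symm i) := by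
  funext j
  simp only [invAct, stdVec_apply, Pi.smul_apply, smul_eq_mul, ← Equiv.eq_symm_apply]
  split_ifs with h <;> simp [h]

lemma neg_invAct_stdVec_mem_posRoots_iff (π : SignedPerm n) (i : Fin n) :
    -invAct π (stdVec n i) ∈ posRoots n ↔ π.sign (π.toPerm.symm i) = -1 := by
  rw [invAct_stdVec, ← neg_smul, smul_stdVec_mem_posRoots_iff (neg_ne_zero.2 (π.sign_ne_zero _)),
    neg_eq_iff_eq_neg]

lemma neg_invAct_add_smul_stdVec_mem_posRoots_iff (π : SignedPerm n) {ε : ℤ}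
    (hε : ε = 1 ∨ ε = -1) {i j : Fin n} (hij : i ≠ j) :
    -invAct π (stdVec n i + ε • stdVec n j) ∈ posRoots n ↔
      if π.toPerm.symm i < π.toPerm.symm j then π.sign (π.toPerm.symm i) = -1
      else ε * π.sign (π.toPerm.symm j) = -1 := by
  have hs := π.sign_mem
  rw [invAct_add, invAct_smul, invAct_stdVec, invAct_stdVec, neg_add, smul_smul, ← neg_smul,
    ← neg_smul, smul_stdVec_add_smul_stdVec_mem_posRoots_iff_of_ne (by grind) (by grind)
      (by simpa using hij), neg_eq_iff_eq_neg, neg_eq_iff_eq_neg]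

lemma invAt_eq (π : SignedPerm n) (i : Fin n) :
    invAt π i = if π.sign (π.toPerm.symm i) = -1
      then 2 * (n - 1 - i) + 1 - lehmer π.toPerm.symm i else lehmer π.toPerm.symm i := by
  classical
  have hpair : ∀ j ∈ Ioi i,
      ((if -invAct π (stdVec n i + stdVec n j) ∈ posRoots n then 1 else 0) +
        (if -invAct π (stdVec n i - stdVec n j) ∈ posRoots n then 1 else 0) : ℕ) =
      if π.toPerm.symm j < π.toPerm.symm i then 1
      else if π.sign (π.toPerm.symm i) = -1 then 2 else 0 := by
    intro j hj
    have hij : i ≠ j := (mem_Ioi.1 hj).ne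
    have hplus := π.neg_invAct_add_smul_stdVec_mem_posRoots_iff (Or.inl rfl) hij
    have hminus := π.neg_invAct_add_smul_stdVec_mem_posRoots_iff (Or.inr rfl) hij
    rw [one_smul] at hplus
    rw [neg_one_smul, ← sub_eq_add_neg] at hminus
    simp only [hplus, hminus]
    rcases (π.toPerm.symm.injective.ne hij).lt_or_gt with h | h
    · simp only [h, h.not_gt, if_true, if_false]
      split_ifs <;> rfl
    · rcases π.sign_mem (π.toPerm.symm j) with hs | hs <;> simp [h, h.not_gt, hs]
  have hcard :=
    card_filter_add_card_filter_not (s := Ioi i) (fun j => π.toPerm.symm j < π.toPerm.symm i)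
  rw [invAt, ncard_sep_posRootsAt, sum_congr rfl hpair, sum_ite, sum_const, sum_const,
    smul_eq_mul, smul_eq_mul, mul_one, π.neg_invAct_stdVec_mem_posRoots_iff]
  rw [Fin.card_Ioi] at hcard
  rw [← lehmer] at hcard ⊢
  split_ifs <;> omega

lemma invAt_lt (π : SignedPerm n) (i : Fin n) : invAt π i < 2 * (n - i) := by
  have := lehmer_le π.toPerm.symm i
  rw [invAt_eq]
  split_ifs <;> omega

lemma lehmer_toPerm_symm_eq (π : SignedPerm n) (i : Fin n) :
    lehmer π.toPerm.symm i =
      if n - 1 - i < invAt π i then 2 * (n - 1 - i) + 1 - invAt π i else invAt π i := by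
  have := lehmer_le π.toPerm.symm i
  rw [invAt_eq]
  split_ifs <;> omega

lemma sign_eq_neg_one_iff_lt_invAt (π : SignedPerm n) (m : Fin n) :
    π.sign m = -1 ↔ n - 1 - π.toPerm m < invAt π (π.toPerm m) := by
  have := lehmer_le π.toPerm.symm (π.toPerm m)
  rw [invAt_eq, Equiv.symm_apply_apply]
  split_ifs <;> omega

lemma eq_of_invAt_eq {π π' : SignedPerm n} (h : ∀ i, invAt π i = invAt π' i) : π = π' := by
  have hperm : π.toPerm = π'.toPerm := Equiv.symm_bijective.injective <|
    lehmer_injective <| funext fun i => by rw [lehmer_toPerm_symm_eq, lehmer_toPerm_symm_eq, h]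
  refine ext hperm (funext fun m => ?_)
  have hneg := π.sign_eq_neg_one_iff_lt_invAt m
  rw [hperm, h, ← sign_eq_neg_one_iff_lt_invAt] at hneg
  rcases π.sign_mem m with hs | hs <;> rcases π'.sign_mem m with hs' | hs' <;> simp_all

noncomputable def equivPermUnits (n : ℕ) :
    SignedPerm n ≃ Equiv.Perm (Fin n) × (Fin n → ℤˣ) where
  toFun π := (π.toPerm, fun i => (Int.isUnit_iff.2 (π.sign_mem i)).unit)
  invFun p := ⟨p.1, fun i => p.2 i, fun i => Int.isUnit_iff.1 (p.2 i).isUnit⟩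
  left_inv _ := ext rfl rfl
  right_inv _ := Prod.ext rfl (funext fun _ => Units.ext rfl)

noncomputable instance (n : ℕ) : Fintype (SignedPerm n) :=
  Fintype.ofEquiv _ (equivPermUnits n).symm

lemma card_eq_two_pow_mul_factorial (n : ℕ) :
    Fintype.card (SignedPerm n) = 2 ^ n * n.factorial := by
  simp [Fintype.card_congr (equivPermUnits n), Fintype.card_perm, mul_comm]

noncomputable def hyperoctahedralDigits (π : SignedPerm n) (i : Fin n) : Fin (2 * (i + 1)) :=
  ⟨invAt π i.rev, by simpa [Fin.val_rev, Nat.sub_sub_self i.isLt] using π.invAt_lt i.rev⟩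

lemma hyperoctahedralDigits_bijective :
    Function.Bijective (hyperoctahedralDigits (n := n)) := by
  refine (Fintype.bijective_iff_injective_and_card _).2 ⟨fun π π' h => ?_, ?_⟩
  · refine eq_of_invAt_eq fun i => ?_
    simpa [hyperoctahedralDigits] using congrArg Fin.val (congrFun h i.rev)
  · simp [card_eq_two_pow_mul_factorial, Fin.prod_two_mul_succ]

end SignedPerm

theorem hyperoctahedral_code_bijective (n : ℕ) :
    Set.BijOn
      (fun π : SignedPerm n =>
        ∑ i : Fin n, invAt π i.rev * (2 ^ (i : ℕ) * Nat.factorial (i : ℕ)))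
      Set.univ (Set.Iio (2 ^ n * Nat.factorial n)) := by
  have hcode : (fun π : SignedPerm n =>
      ∑ i : Fin n, invAt π i.rev * (2 ^ (i : ℕ) * Nat.factorial (i : ℕ))) =
      Fin.val ∘ finPiFinEquiv ∘ SignedPerm.hyperoctahedralDigits := by
    funext π
    simp [finPiFinEquiv_apply, SignedPerm.hyperoctahedralDigits, Fin.prod_two_mul_succ]
  have hbij := finPiFinEquiv.bijective.comp (SignedPerm.hyperoctahedralDigits_bijective (n := n))
  rw [hcode, ← Fin.prod_two_mul_succ, ← Fin.range_val, ← hbij.2.range_comp,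
    ← Set.image_univ]
  exact (Fin.val_injective.comp hbij.1).injOn.bijOn_image
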